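/- Let N ∈ ℕ and let b_1,…,b_N ∈ ℝ satisfy ∏_{i=1}^{N} (1+|b_i|) ≤ R/N for a constant R ≥ 1. Define 𝓕_i^{(n)} for i ∈ {0,1,…,N−1} and n ∈ ℤ_{≥0} by 𝓕_i^{(n)} = δ_{n,i} (Kronecker delta) if n ≤ N−1, and 𝓕_i^{(n)} = ∑_{r=1}^{N} (−1)^{r+1} 𝒞_r^N 𝓕_i^{(n−r)} otherwise. Then |𝓕_i^{(n)}| ≤ R^n for all i ∈ {0,1,…,N−1} and all n ∈ ℤ_{≥0}. -/

import Mathlib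

/-!
Expanding `∏ (1 + |b_i|)` shows that `∑_{r ≥ 1} |𝒞_r^N| ≤ ∏ (1 + |b_i|) ≤ R / N ≤ R`. Each
`𝓕_i^{(n)}` with `n ≥ N` is a combination of `𝓕_i^{(n-1)}, …, 𝓕_i^{(n-N)}` with coefficients
`±𝒞_r^N`, so by strong induction `|𝓕_i^{(n)}| ≤ (∑_r |𝒞_r^N|) R^{n-1} ≤ R^n`.
-/

/-- `calC N b r` is the coefficient of `t^(N-r)` in the polynomial `∏_{i=1}^N (t + b i)`,
i.e. the `r`-th elementary symmetric polynomial of `b_1, …, b_N`. -/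
noncomputable def calC (N : ℕ) (b : Fin N → ℝ) (r : ℕ) : ℝ :=
  (∏ i, (Polynomial.X + Polynomial.C (b i))).coeff (N - r)

/-- `calF N b i n` is `𝓕_i^{(n)}`: the Kronecker delta `δ_{n,i}` if `n ≤ N−1`, and
`∑_{r=1}^N (−1)^{r+1} 𝒞_r^N 𝓕_i^{(n−r)}` otherwise. -/
noncomputable def calF (N : ℕ) (b : Fin N → ℝ) (i : ℕ) : ℕ → ℝ
  | n =>
    if _h : n < N then (if n = i then 1 else 0)
    else
      ∑ r ∈ (Finset.Icc 1 N).attach,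
        (-1 : ℝ) ^ ((r : ℕ) + 1) * calC N b r * calF N b i (n - r)
  termination_by n => n
  decreasing_by
    have h1 := Finset.mem_Icc.mp r.2
    omega

open Finset

theorem abs_le_pow_of_linear_recurrence {N : ℕ} {c f : ℕ → ℝ} {R : ℝ} (hR : 1 ≤ R)
    (hc : ∑ r ∈ Icc 1 N, |c r| ≤ R) (hinit : ∀ n < N, |f n| ≤ 1)
    (hrec : ∀ n, N ≤ n → f n = ∑ r ∈ Icc 1 N, c r * f (n - r)) (n : ℕ) :
    |f n| ≤ R ^ n := by
  induction n using Nat.strong_induction_on with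
  | _ n ih =>
  rcases lt_or_ge n N with hnN | hNn
  · exact (hinit n hnN).trans (one_le_pow₀ hR)
  rcases Nat.eq_zero_or_pos n with rfl | hn
  · obtain rfl := Nat.le_zero.mp hNn
    rw [hrec 0 le_rfl, Icc_eq_empty (by omega), sum_empty, abs_zero]
    exact zero_le_one.trans (one_le_pow₀ hR)
  have hterm : ∀ r ∈ Icc 1 N, |c r * f (n - r)| ≤ |c r| * R ^ (n - 1) := by
    intro r hr
    obtain ⟨hr1, hrN⟩ := mem_Icc.mp hr
    rw [abs_mul]
    gcongr
    exact (ih (n - r) (by omega)).trans (pow_le_pow_right₀ hR (by omega))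
  calc |f n| ≤ ∑ r ∈ Icc 1 N, |c r * f (n - r)| := hrec n hNn ▸ abs_sum_le_sum_abs _ _
    _ ≤ (∑ r ∈ Icc 1 N, |c r|) * R ^ (n - 1) := by
        rw [sum_mul]
        exact sum_le_sum hterm
    _ ≤ R * R ^ (n - 1) := by gcongr
    _ = R ^ n := by rw [← pow_succ', Nat.sub_add_cancel hn]

section

variable {N : ℕ} (b : Fin N → ℝ) (i : ℕ)

theorem calF_of_lt {n : ℕ} (h : n < N) : calF N b i n = if n = i then 1 else 0 := by
  rw [calF, dif_pos h]

theorem calF_of_le {n : ℕ} (h : N ≤ n) :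
    calF N b i n = ∑ r ∈ Icc 1 N, (-1 : ℝ) ^ (r + 1) * calC N b r * calF N b i (n - r) := by
  rw [calF, dif_neg (not_lt.mpr h)]
  exact sum_attach (Icc 1 N) fun r => (-1 : ℝ) ^ (r + 1) * calC N b r * calF N b i (n - r)

theorem abs_calC_le {r : ℕ} (hr : r ≤ N) :
    |calC N b r| ≤ ∑ t ∈ powersetCard r univ, ∏ j ∈ t, |b j| := by
  have hcoeff := prod_X_add_C_coeff (univ : Finset (Fin N)) b
    (k := N - r) (by simp)
  rw [calC, hcoeff, card_univ, Fintype.card_fin, Nat.sub_sub_self hr]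
  refine (abs_sum_le_sum_abs _ _).trans_eq ?_
  simp only [abs_prod]

theorem sum_abs_calC_le_prod : ∑ r ∈ Icc 1 N, |calC N b r| ≤ ∏ j, (1 + |b j|) :=
  calc ∑ r ∈ Icc 1 N, |calC N b r|
      ≤ ∑ r ∈ Icc 1 N, ∑ t ∈ powersetCard r univ, ∏ j ∈ t, |b j| :=
        sum_le_sum fun r hr => abs_calC_le b (mem_Icc.mp hr).2
    _ ≤ ∑ r ∈ range (N + 1), ∑ t ∈ powersetCard r univ, ∏ j ∈ t, |b j| := by
        refine sum_le_sum_of_subset_of_nonneg (fun r hr => ?_) fun _ _ _ => by positivity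
        simp only [mem_Icc, mem_range] at hr ⊢
        omega
    _ = ∏ j, (1 + |b j|) := by
        rw [prod_one_add, sum_powerset, card_univ, Fintype.card_fin]

theorem abs_calF_le_pow {R : ℝ} (hR : 1 ≤ R) (hb : ∏ j, (1 + |b j|) ≤ R) (n : ℕ) :
    |calF N b i n| ≤ R ^ n := by
  refine abs_le_pow_of_linear_recurrence (N := N) (c := fun r => (-1 : ℝ) ^ (r + 1) * calC N b r) hR
    ?_ (fun n hn => ?_) (fun n hn => by simp only [calF_of_le b i hn, mul_assoc]) n
  · simpa only [abs_mul, abs_pow, abs_neg, abs_one, one_pow, one_mul]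
      using (sum_abs_calC_le_prod b).trans hb
  · rw [calF_of_lt b i hn]
    split_ifs <;> simp

end

theorem statement8 (N : ℕ) (b : Fin N → ℝ) (R : ℝ) (hR : 1 ≤ R)
    (hb : ∏ i, (1 + |b i|) ≤ R / N) :
    ∀ i < N, ∀ n : ℕ, |calF N b i n| ≤ R ^ n := by
  intro i hi n
  have hN : (1 : ℝ) ≤ N := Nat.one_le_cast.mpr (Nat.one_le_of_lt hi)
  exact abs_calF_le_pow b i hR (hb.trans (div_le_self (by linarith) hN)) n
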